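/- arXiv:1507.00555 — 2 statements merged into one kernel-verified Lean document; each statement's English description precedes it below -/
import Mathlib

section
/- Assume n i ≠ −1 for all i ∈ Fin r. Then the group homomorphism Φ₀ from (Fin r → ℤ) to the product ∏_{i < j} ZMod (N i j) (product over all unordered pairs of distinct indices, represented by pairs i < j), which sends x to the family whose (i, j)-component is the image of x i − x j in ZMod (N i j), is surjective. -/
/-- `N i j`: the gcd (as a nonnegative integer) of the family consisting of `n k` for
`k ∉ {i, j}` together with `n i + 1` and `n j + 1`. -/
def Npair {r : ℕ} (n : Fin r → ℤ) (i j : Fin r) : ℕ :=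
  Nat.gcd ((Finset.univ \ {i, j}).gcd fun k => (n k).natAbs)
    (Nat.gcd (n i + 1).natAbs (n j + 1).natAbs)

lemma crt_aux {ι : Type*} [DecidableEq ι] (m : ι → ℕ) (c : ∀ t, ZMod (m t)) (s : Finset ι)
    (h : ∀ t ∈ s, ∀ u ∈ s, t ≠ u → Nat.Coprime (m t) (m u)) :
    ∃ z : ℤ, ∀ t ∈ s, (z : ZMod (m t)) = c t := by
  classical
  induction s using Finset.induction_on with
  | empty => exact ⟨0, by simp⟩
  | @insert a s ha ih =>
    obtain ⟨z, hz⟩ := ih (fun t ht u hu htu =>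
      h t (Finset.mem_insert_of_mem ht) u (Finset.mem_insert_of_mem hu) htu)
    have hcopn : Nat.Coprime (m a) (∏ u ∈ s, m u) :=
      Nat.Coprime.prod_right (fun u hu =>
        h a (Finset.mem_insert_self a s) u (Finset.mem_insert_of_mem hu)
          (by rintro rfl; exact ha hu))
    have hcop : IsCoprime ((m a : ℤ)) (∏ u ∈ s, (m u : ℤ)) := by
      rw [Int.isCoprime_iff_gcd_eq_one]
      have : ((∏ u ∈ s, m u : ℕ) : ℤ) = ∏ u ∈ s, (m u : ℤ) := by push_cast; ring
      rw [← this, Int.gcd_natCast_natCast]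
      exact hcopn
    obtain ⟨x, y, hxy⟩ := hcop
    set ca : ℤ := ZMod.cast (c a) with hca
    refine ⟨z + (∏ u ∈ s, (m u : ℤ)) * (y * (ca - z)), ?_⟩
    intro t ht
    rcases Finset.mem_insert.mp ht with rfl | hts
    · have h1 : z + (∏ u ∈ s, (m u : ℤ)) * (y * (ca - z))
          = ca + (m t : ℤ) * (-x * (ca - z)) := by linear_combination (ca - z) * hxy
      rw [h1]
      push_cast
      simp [hca, ZMod.intCast_zmod_cast, ZMod.natCast_self]
    · obtain ⟨Q, hQ⟩ := Finset.dvd_prod_of_mem (fun u => (m u : ℤ)) hts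
      have h1 : z + (∏ u ∈ s, (m u : ℤ)) * (y * (ca - z))
          = z + (m t : ℤ) * (Q * (y * (ca - z))) := by rw [hQ]; ring
      rw [h1]
      push_cast
      simp [hz t hts, ZMod.natCast_self]

lemma Npair_dvd_nk {r : ℕ} (n : Fin r → ℤ) {i j k : Fin r} (hki : k ≠ i) (hkj : k ≠ j) :
    ((Npair n i j : ℤ)) ∣ n k := by
  have h1 : Npair n i j ∣ (n k).natAbs :=
    dvd_trans (Nat.gcd_dvd_left _ _)
      (Finset.gcd_dvd (by simp [Finset.mem_sdiff, hki, hkj]))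
  exact dvd_trans (Int.natCast_dvd_natCast.mpr h1) (Int.natAbs_dvd.mpr dvd_rfl)

lemma Npair_dvd_mem {r : ℕ} (n : Fin r → ℤ) {i j k : Fin r} (hk : k = i ∨ k = j) :
    ((Npair n i j : ℤ)) ∣ n k + 1 := by
  have h1 : Npair n i j ∣ (n k + 1).natAbs := by
    rcases hk with rfl | rfl
    · exact dvd_trans (Nat.gcd_dvd_right _ _) (Nat.gcd_dvd_left _ _)
    · exact dvd_trans (Nat.gcd_dvd_right _ _) (Nat.gcd_dvd_right _ _)
  exact dvd_trans (Int.natCast_dvd_natCast.mpr h1) (Int.natAbs_dvd.mpr dvd_rfl)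

lemma Npair_coprime {r : ℕ} (n : Fin r → ℤ) {i j i' j' : Fin r} (hij : i < j) (hij' : i' < j')
    (hne : (i, j) ≠ (i', j')) : Nat.Coprime (Npair n i j) (Npair n i' j') := by
  have hkex : ∃ k, (k = i' ∨ k = j') ∧ k ≠ i ∧ k ≠ j := by
    by_cases h1 : i' = i ∨ i' = j
    · by_cases h2 : j' = i ∨ j' = j
      · exfalso
        rcases h1 with h1 | h1 <;> rcases h2 with h2 | h2
        · have := hij'; rw [h1, h2] at this; exact lt_irrefl _ this
        · exact hne (by rw [h1, h2])
        · have := hij'; rw [h1, h2] at this; exact lt_irrefl _ (hij.trans this)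
        · have := hij'; rw [h1, h2] at this; exact lt_irrefl _ this
      · exact ⟨j', Or.inr rfl, by tauto, by tauto⟩
    · exact ⟨i', Or.inl rfl, by tauto, by tauto⟩
  obtain ⟨k, hk, hki, hkj⟩ := hkex
  have d1 : ((Npair n i j : ℤ)) ∣ n k := Npair_dvd_nk n hki hkj
  have d2 : ((Npair n i' j' : ℤ)) ∣ n k + 1 := Npair_dvd_mem n hk
  set g := Nat.gcd (Npair n i j) (Npair n i' j') with hg
  have hg1 : (g : ℤ) ∣ n k :=
    dvd_trans (Int.natCast_dvd_natCast.mpr (Nat.gcd_dvd_left _ _)) d1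
  have hg2 : (g : ℤ) ∣ n k + 1 :=
    dvd_trans (Int.natCast_dvd_natCast.mpr (Nat.gcd_dvd_right _ _)) d2
  have : (g : ℤ) ∣ 1 := by
    have := dvd_sub hg2 hg1
    simpa using this
  have : g ∣ 1 := Int.natCast_dvd_natCast.mp (by exact_mod_cast this)
  exact Nat.dvd_one.mp this

/-- If no `n i` equals `-1`, the homomorphism `Φ₀ : (Fin r → ℤ) → ∏_{i < j} ZMod (N i j)`
sending `x` to the family of images of `x i - x j` in `ZMod (N i j)` is surjective. -/
theorem Phi0_surjective {r : ℕ} (n : Fin r → ℤ) (hn : ∀ i, n i ≠ -1) :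
    Function.Surjective
      (fun (x : Fin r → ℤ) (p : {p : Fin r × Fin r // p.1 < p.2}) =>
        ((x p.1.1 - x p.1.2 : ℤ) : ZMod (Npair n p.1.1 p.1.2))) := by
  classical
  intro y
  have key : ∀ i : Fin r, ∃ z : ℤ, ∀ p : {p : Fin r × Fin r // p.1 < p.2},
      (p.1.1 = i ∨ p.1.2 = i) → (z : ZMod (Npair n p.1.1 p.1.2)) =
        (if p.1.1 = i then y p else 0) := by
    intro i
    obtain ⟨z, hz⟩ := crt_aux (fun p : {p : Fin r × Fin r // p.1 < p.2} => Npair n p.1.1 p.1.2)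
      (fun p => if p.1.1 = i then y p else 0)
      (Finset.univ.filter fun p => p.1.1 = i ∨ p.1.2 = i)
      (by
        intro t ht u hu htu
        refine Npair_coprime n t.2 u.2 ?_
        intro hcontra
        apply htu
        apply Subtype.ext
        calc t.1 = (t.1.1, t.1.2) := rfl
          _ = (u.1.1, u.1.2) := hcontra
          _ = u.1 := rfl)
    exact ⟨z, fun p hp => hz p (by simp [hp])⟩
  choose x hx using key
  refine ⟨x, ?_⟩
  funext p
  have hlt : p.1.1 ≠ p.1.2 := ne_of_lt p.2
  have h1 : ((x p.1.1 : ℤ) : ZMod (Npair n p.1.1 p.1.2)) = y p := by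
    have := hx p.1.1 p (Or.inl rfl)
    simpa using this
  have h2 : ((x p.1.2 : ℤ) : ZMod (Npair n p.1.1 p.1.2)) = 0 := by
    have := hx p.1.2 p (Or.inr rfl)
    simpa [hlt] using this
  simp only []
  push_cast
  rw [h1, h2, sub_zero]
end

section
/- Assume r ≥ 2, n i ≠ −1 for all i, ∑_{i} n i = −2, and at most two indices i have n i odd. Then H equals the kernel of the homomorphism Φ̄ : G → ∏_{i < j} ZMod (N i j) defined componentwise by Φ̄(x)_{i j} = (reduction of x i to ZMod (N i j)) − (reduction of x j to ZMod (N i j)). -/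
/-- The element `m • e i` of `G = ∏_{j} ZMod |n j + 1|`: the `i`-th coordinate is the image
of `m` in `ZMod |n i + 1|`, and all other coordinates are `0`. -/
def esingle {r : ℕ} (n : Fin r → ℤ) (i : Fin r) (m : ℤ) :
    (j : Fin r) → ZMod ((n j + 1).natAbs) :=
  Pi.single i (m : ZMod ((n i + 1).natAbs))

/-- `τ i j = (n j) • e i + (n i) • e j`. -/
def tau {r : ℕ} (n : Fin r → ℤ) (i j : Fin r) : (k : Fin r) → ZMod ((n k + 1).natAbs) :=
  esingle n i (n j) + esingle n j (n i)

/-- `H`: the subgroup of `G` generated by the elements `τ i j` over all pairs `i ≠ j`. -/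
def Hsub {r : ℕ} (n : Fin r → ℤ) : AddSubgroup ((k : Fin r) → ZMod ((n k + 1).natAbs)) :=
  AddSubgroup.closure {x | ∃ i j, i ≠ j ∧ x = tau n i j}

lemma Npair_dvd_fst {r : ℕ} (n : Fin r → ℤ) (i j : Fin r) : Npair n i j ∣ (n i + 1).natAbs :=
  (Nat.gcd_dvd_right _ _).trans (Nat.gcd_dvd_left _ _)

lemma Npair_dvd_snd {r : ℕ} (n : Fin r → ℤ) (i j : Fin r) : Npair n i j ∣ (n j + 1).natAbs :=
  (Nat.gcd_dvd_right _ _).trans (Nat.gcd_dvd_right _ _)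

/-- The homomorphism `Φ̄ : G → ∏_{i < j} ZMod (N i j)`, whose `(i, j)`-component is the
reduction of `x i` minus the reduction of `x j` in `ZMod (N i j)`. -/
def Phibar {r : ℕ} (n : Fin r → ℤ) :
    ((i : Fin r) → ZMod ((n i + 1).natAbs)) →+
      ((p : {p : Fin r × Fin r // p.1 < p.2}) → ZMod (Npair n p.1.1 p.1.2)) :=
  AddMonoidHom.mk'
    (fun x p =>
      ZMod.castHom (Npair_dvd_fst n p.1.1 p.1.2) (ZMod (Npair n p.1.1 p.1.2)) (x p.1.1)
        - ZMod.castHom (Npair_dvd_snd n p.1.1 p.1.2) (ZMod (Npair n p.1.1 p.1.2)) (x p.1.2))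
    (fun x y => by funext p; simp [Pi.add_apply, map_add]; ring)

/-!
Everything is lifted to `ℤ^r`. There `H` pulls back to the lattice `Λ` (`HsubInt n`) generated
by the vectors `(n i + 1) e i` and the integer lifts of the `τ i j`, and `ker Φ̄` to the vectors
`y` with `N i j ∣ y i - y j`. The inclusion `H ≤ ker Φ̄` is a check on generators: modulo `N i j`
every `n k` vanishes except `n i ≡ n j ≡ -1`.

For the converse it suffices to find, for every prime `p`, some `c` prime to `p` with `c y ∈ Λ`.
Since `∑ n = -2`, `Λ` contains every constant vector `(n i, …, n i)`. If `p ∣ n i + 1`, then `n i`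
is prime to `p`, so all constant vectors are available `p`-locally, and it remains to get
`(y m - y i) e m` for each `m`. This is automatic when `p ∤ n m + 1`. When `p` also divides some
third `n k + 1`, `p` is odd (at most two `n k` are odd) and `2 n i n k e m ∈ Λ` suffices. Otherwise
the `t` with `t e m` `p`-locally in `Λ` form an ideal containing `n m + 1`, `n i + 1` and all
other `n k`, hence containing `N m i`, which divides `y m - y i`.
-/

namespace AddSubgroup

variable {M : Type*} [AddCommGroup M]

lemma exists_int_mem_iff_dvd (J : AddSubgroup ℤ) : ∃ g : ℤ, ∀ x, x ∈ J ↔ g ∣ x := by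
  obtain ⟨g, rfl⟩ := Int.subgroup_cyclic J
  exact ⟨g, fun x => by rw [← zmultiples_eq_closure, Int.mem_zmultiples_iff]⟩

/-- For a prime `p` this is the preimage in `M` of the localization `Z_(p) ⊆ M_(p)`. -/
def coprimeSaturation (p : ℤ) (Z : AddSubgroup M) : AddSubgroup M where
  carrier := {y | ∃ c : ℤ, IsCoprime c p ∧ c • y ∈ Z}
  zero_mem' := ⟨1, isCoprime_one_left, by simp⟩
  add_mem' := by
    rintro y z ⟨c, hc, hy⟩ ⟨d, hd, hz⟩
    refine ⟨c * d, hc.mul_left hd, ?_⟩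
    rw [smul_add, mul_comm c d, mul_smul, mul_comm d c, mul_smul]
    exact Z.add_mem (Z.zsmul_mem hy d) (Z.zsmul_mem hz c)
  neg_mem' := by
    rintro y ⟨c, hc, hy⟩
    exact ⟨c, hc, by simpa using Z.neg_mem hy⟩

variable {p : ℤ} {Z : AddSubgroup M} {y : M}

lemma mem_coprimeSaturation_of_zsmul_mem {c : ℤ} (hc : IsCoprime c p) (h : c • y ∈ Z) :
    y ∈ Z.coprimeSaturation p :=
  ⟨c, hc, h⟩

lemma le_coprimeSaturation : Z ≤ Z.coprimeSaturation p :=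
  fun _ hy => mem_coprimeSaturation_of_zsmul_mem isCoprime_one_left (by simpa using hy)

lemma mem_of_forall_prime_mem_coprimeSaturation
    (h : ∀ p : ℕ, p.Prime → y ∈ Z.coprimeSaturation p) : y ∈ Z := by
  obtain ⟨g, hg⟩ := exists_int_mem_iff_dvd (Z.comap (zmultiplesHom M y))
  suffices g.natAbs = 1 by simpa using (hg 1).mpr (Int.natAbs_dvd.mp (by simp [this]))
  by_contra hg1
  obtain ⟨p, hp, hpg⟩ := Nat.exists_prime_and_dvd hg1
  obtain ⟨c, hc, hcy⟩ := h p hp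
  exact (Nat.prime_iff_prime_int.mp hp).not_isUnit <|
    hc.isUnit_of_dvd' ((Int.natCast_dvd.mpr hpg).trans ((hg c).mp hcy)) dvd_rfl

lemma pi_mem_of_const_mem_of_single_sub_mem {ι A : Type*} [Fintype ι] [DecidableEq ι]
    [AddCommGroup A] (Z : AddSubgroup (ι → A)) {y : ι → A} (c : A) (hc : (fun _ => c) ∈ Z)
    (h : ∀ m, Pi.single m (y m - c) ∈ Z) : y ∈ Z := by
  have hy : y = (fun _ => c) + ∑ m, Pi.single m (y m - c) := by
    rw [Finset.univ_sum_single (fun m => y m - c)]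
    ext
    simp
  rw [hy]
  exact add_mem hc (sum_mem fun m _ => h m)

end AddSubgroup

lemma isCoprime_of_dvd_add_one {R : Type*} [CommRing R] {a d : R} (h : d ∣ a + 1) :
    IsCoprime a d :=
  IsCoprime.of_isCoprime_of_dvd_right ⟨-1, 1, by ring⟩ h

section Lattice

variable {r : ℕ} (n : Fin r → ℤ)

lemma Npair_comm (i j : Fin r) : Npair n i j = Npair n j i := by
  rw [Npair, Npair, Finset.pair_comm, Nat.gcd_comm (n i + 1).natAbs]

lemma Npair_dvd_of_ne {i j k : Fin r} (hki : k ≠ i) (hkj : k ≠ j) : (Npair n i j : ℤ) ∣ n k :=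
  Int.natCast_dvd.mpr <| (Nat.gcd_dvd_left _ _).trans (Finset.gcd_dvd (by simp [hki, hkj]))

lemma dvd_Npair {d : ℤ} {i j : Fin r} (hi : d ∣ n i + 1) (hj : d ∣ n j + 1)
    (hk : ∀ k, k ≠ i → k ≠ j → d ∣ n k) : d ∣ Npair n i j :=
  Int.dvd_natCast.mpr <| Nat.dvd_gcd
    (Finset.dvd_gcd fun k hk' => Int.natAbs_dvd_natAbs.mpr <| hk k (by simp_all) (by simp_all))
    (Nat.dvd_gcd (Int.natAbs_dvd_natAbs.mpr hi) (Int.natAbs_dvd_natAbs.mpr hj))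

def reduceMod : (Fin r → ℤ) →+ ((k : Fin r) → ZMod ((n k + 1).natAbs)) :=
  AddMonoidHom.pi fun k => (Int.castAddHom _).comp (Pi.evalAddMonoidHom (fun _ => ℤ) k)

@[simp] lemma reduceMod_apply (y : Fin r → ℤ) (k : Fin r) : reduceMod n y k = (y k : ZMod _) :=
  rfl

lemma reduceMod_surjective : Function.Surjective (reduceMod n) := fun x =>
  ⟨fun k => (ZMod.intCast_surjective (x k)).choose,
    funext fun k => (ZMod.intCast_surjective (x k)).choose_spec⟩

lemma reduceMod_single (i : Fin r) (m : ℤ) : reduceMod n (Pi.single i m) = esingle n i m := by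
  ext k
  rcases eq_or_ne k i with rfl | h <;> simp [esingle, *]

def tauInt (i j : Fin r) : Fin r → ℤ := Pi.single i (n j) + Pi.single j (n i)

lemma reduceMod_tauInt (i j : Fin r) : reduceMod n (tauInt n i j) = tau n i j := by
  rw [tauInt, map_add, reduceMod_single, reduceMod_single, tau]

def HsubInt : AddSubgroup (Fin r → ℤ) := (Hsub n).comap (reduceMod n)

lemma single_mul_mem_HsubInt (i : Fin r) (t : ℤ) : Pi.single i ((n i + 1) * t) ∈ HsubInt n := by
  have : reduceMod n (Pi.single i ((n i + 1) * t)) = 0 := by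
    ext k
    rcases eq_or_ne k i with rfl | h
    · have : ((n k + 1 : ℤ) : ZMod (n k + 1).natAbs) = 0 :=
        (ZMod.intCast_zmod_eq_zero_iff_dvd _ _).mpr Int.natAbs_dvd_self
      simp [Int.cast_mul, this]
    · simp [h]
  simp [HsubInt, this]

lemma tauInt_mem_HsubInt {i j : Fin r} (h : i ≠ j) : tauInt n i j ∈ HsubInt n := by
  rw [HsubInt, AddSubgroup.mem_comap, reduceMod_tauInt]
  exact AddSubgroup.subset_closure ⟨i, j, h, rfl⟩

/-- Summing `tauInt n i j` over `j ≠ i` gives the constant vector `n i` up to `2 (n i + 1) e i`,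
because `∑ j ≠ i, n j = -2 - n i`. -/
lemma const_mem_HsubInt (hsum : ∑ i, n i = -2) (i : Fin r) : (fun _ => n i) ∈ HsubInt n := by
  have hdecomp : (fun _ => n i) =
      ∑ j ∈ Finset.univ.erase i, tauInt n i j + Pi.single i ((n i + 1) * 2) := by
    ext m
    rcases eq_or_ne m i with rfl | hm
    · simp only [tauInt, Finset.sum_add_distrib, Finset.mem_univ, Finset.sum_erase_eq_sub,
        Pi.add_apply, Pi.sub_apply, Finset.sum_apply, Pi.single_eq_same, Pi.single_apply,
        Finset.sum_ite_eq, ↓reduceIte, sub_self, add_zero, hsum]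
      ring
    · simp [tauInt, Finset.sum_add_distrib, Pi.single_apply, hm]
  rw [hdecomp]
  exact add_mem (sum_mem fun j hj => tauInt_mem_HsubInt n (Finset.ne_of_mem_erase hj).symm)
    (single_mul_mem_HsubInt n i 2)

lemma single_two_mul_mul_mem_HsubInt {i j k : Fin r} (hij : i ≠ j) (hik : i ≠ k) (hjk : j ≠ k) :
    (Pi.single i (2 * n j * n k) : Fin r → ℤ) ∈ HsubInt n := by
  have hdecomp : (Pi.single i (2 * n j * n k) : Fin r → ℤ) =
      n k • tauInt n i j + n j • tauInt n i k - n i • tauInt n j k := by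
    ext m
    simp only [tauInt, Pi.add_apply, Pi.sub_apply, Pi.smul_apply, smul_eq_mul, Pi.single_apply]
    split_ifs <;> subst_vars <;> simp_all <;> ring
  rw [hdecomp]
  exact sub_mem (add_mem (zsmul_mem (tauInt_mem_HsubInt n hij) _)
    (zsmul_mem (tauInt_mem_HsubInt n hik) _)) (zsmul_mem (tauInt_mem_HsubInt n hjk) _)

lemma Phibar_reduceMod_eq_zero_iff (y : Fin r → ℤ) :
    Phibar n (reduceMod n y) = 0 ↔ ∀ a b : Fin r, a < b → (Npair n a b : ℤ) ∣ y a - y b := by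
  simp only [funext_iff, Phibar, AddMonoidHom.mk'_apply, reduceMod_apply, map_intCast,
    ← Int.cast_sub, ZMod.intCast_zmod_eq_zero_iff_dvd, Pi.zero_apply, Subtype.forall, Prod.forall]

lemma Npair_dvd_tauInt_sub {i j a b : Fin r} (hij : i ≠ j) (hab : a ≠ b) :
    (Npair n a b : ℤ) ∣ tauInt n i j a - tauInt n i j b := by
  rw [← ZMod.intCast_zmod_eq_zero_iff_dvd]
  have ha : ((n a : ℤ) : ZMod (Npair n a b)) = -1 := by
    rw [eq_neg_iff_add_eq_zero]
    exact_mod_cast (ZMod.intCast_zmod_eq_zero_iff_dvd _ _).mpr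
      (Int.natCast_dvd.mpr (Npair_dvd_fst n a b))
  have hb : ((n b : ℤ) : ZMod (Npair n a b)) = -1 := by
    rw [eq_neg_iff_add_eq_zero]
    exact_mod_cast (ZMod.intCast_zmod_eq_zero_iff_dvd _ _).mpr
      (Int.natCast_dvd.mpr (Npair_dvd_snd n a b))
  have hk : ∀ k, k ≠ a → k ≠ b → ((n k : ℤ) : ZMod (Npair n a b)) = 0 := fun k hka hkb =>
    (ZMod.intCast_zmod_eq_zero_iff_dvd _ _).mpr (Npair_dvd_of_ne n hka hkb)
  simp only [tauInt, Pi.add_apply, Pi.single_apply]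
  split_ifs <;> subst_vars <;> push_cast <;> simp_all <;> exact hk _ (by grind) (by grind)

end Lattice

namespace HsubInt

variable {r : ℕ} (n : Fin r → ℤ) {p : ℕ}

lemma single_mem_of_isCoprime {m : Fin r} (h : IsCoprime (n m + 1) p) (t : ℤ) :
    Pi.single m t ∈ (HsubInt n).coprimeSaturation p :=
  AddSubgroup.mem_coprimeSaturation_of_zsmul_mem h <| by
    rw [← Pi.single_smul', smul_eq_mul]
    exact single_mul_mem_HsubInt n m t

lemma const_mem_of_dvd (hsum : ∑ i, n i = -2) {i : Fin r} (hi : (p : ℤ) ∣ n i + 1) (t : ℤ) :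
    (fun _ => t) ∈ (HsubInt n).coprimeSaturation p :=
  AddSubgroup.mem_coprimeSaturation_of_zsmul_mem (isCoprime_of_dvd_add_one hi) <| by
    convert zsmul_mem (const_mem_HsubInt n hsum i) t using 1
    ext
    simp [mul_comm]

lemma single_mem_of_three_dvd (hp : p.Prime)
    (hodd : (Finset.univ.filter fun i => Odd (n i)).card ≤ 2) {i j k : Fin r}
    (hij : i ≠ j) (hik : i ≠ k) (hjk : j ≠ k) (hi : (p : ℤ) ∣ n i + 1) (hj : (p : ℤ) ∣ n j + 1)
    (hk : (p : ℤ) ∣ n k + 1) (t : ℤ) : Pi.single i t ∈ (HsubInt n).coprimeSaturation p := by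
  have hp2 : p ≠ 2 := by
    rintro rfl
    have hsub : {i, j, k} ⊆ Finset.univ.filter fun i => Odd (n i) := by
      intro m hm
      simp only [Finset.mem_insert, Finset.mem_singleton] at hm
      simp only [Finset.mem_filter, Finset.mem_univ, true_and, ← even_add_one, even_iff_two_dvd]
      rcases hm with rfl | rfl | rfl <;> assumption_mod_cast
    have := Finset.card_le_card hsub
    rw [Finset.card_eq_three.mpr ⟨i, j, k, hij, hik, hjk, rfl⟩] at this
    omega
  have h2p : IsCoprime (2 : ℤ) p := by
    exact_mod_cast ((Nat.coprime_primes Nat.prime_two hp).mpr hp2.symm).isCoprime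
  refine AddSubgroup.mem_coprimeSaturation_of_zsmul_mem
    ((h2p.mul_left (isCoprime_of_dvd_add_one hj)).mul_left (isCoprime_of_dvd_add_one hk)) ?_
  rw [← Pi.single_smul', smul_eq_mul, mul_comm, ← smul_eq_mul, Pi.single_smul']
  exact zsmul_mem (single_two_mul_mul_mem_HsubInt n hij hik hjk) t

lemma single_mem_of_Npair_dvd (hsum : ∑ i, n i = -2) {i j : Fin r} (hij : i ≠ j)
    (hj : (p : ℤ) ∣ n j + 1) (hout : ∀ k, k ≠ i → k ≠ j → IsCoprime (n k + 1) p) {t : ℤ}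
    (ht : (Npair n i j : ℤ) ∣ t) : Pi.single i t ∈ (HsubInt n).coprimeSaturation p := by
  obtain ⟨g, hg⟩ := AddSubgroup.exists_int_mem_iff_dvd
    (((HsubInt n).coprimeSaturation p).comap (AddMonoidHom.single (fun _ => ℤ) i))
  have hgi : g ∣ n i + 1 := (hg _).mp <| AddSubgroup.le_coprimeSaturation <| by
    simpa using single_mul_mem_HsubInt n i 1
  have hgj : g ∣ n j + 1 := (hg _).mp <| by
    refine AddSubgroup.pi_mem_of_const_mem_of_single_sub_mem _ (n j + 1)
      (const_mem_of_dvd n hsum hj _) fun m => ?_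
    rcases eq_or_ne m i with rfl | hmi
    · simp
    rcases eq_or_ne m j with rfl | hmj
    · refine AddSubgroup.le_coprimeSaturation ?_
      simpa [hmi] using single_mul_mem_HsubInt n m (-1)
    · exact single_mem_of_isCoprime n (hout m hmi hmj) _
  have hgk : ∀ k, k ≠ i → k ≠ j → g ∣ n k := fun k hki hkj => (hg _).mp <| by
    show (Pi.single i (n k) : Fin r → ℤ) ∈ (HsubInt n).coprimeSaturation p
    rw [← add_sub_cancel_right (Pi.single i (n k) : Fin r → ℤ) (Pi.single k (n i))]
    exact sub_mem (AddSubgroup.le_coprimeSaturation (tauInt_mem_HsubInt n hki.symm))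
      (single_mem_of_isCoprime n (hout k hki hkj) _)
  exact (hg t).mpr ((dvd_Npair n hgi hgj hgk).trans ht)

lemma mem_coprimeSaturation_of_Npair_dvd_sub (hsum : ∑ i, n i = -2)
    (hodd : (Finset.univ.filter fun i => Odd (n i)).card ≤ 2) (hp : p.Prime) {y : Fin r → ℤ}
    (hy : ∀ a b, a ≠ b → (Npair n a b : ℤ) ∣ y a - y b) :
    y ∈ (HsubInt n).coprimeSaturation p := by
  have hcop : ∀ a : ℤ, ¬ (p : ℤ) ∣ a → IsCoprime a p := fun a ha =>
    ((Nat.prime_iff_prime_int.mp hp).irreducible.coprime_iff_not_dvd.mpr ha).symm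
  by_cases hS : ∃ i, (p : ℤ) ∣ n i + 1
  · obtain ⟨i, hi⟩ := hS
    refine AddSubgroup.pi_mem_of_const_mem_of_single_sub_mem _ (y i)
      (const_mem_of_dvd n hsum hi _) fun m => ?_
    rcases eq_or_ne m i with rfl | hmi
    · simp
    by_cases hm : (p : ℤ) ∣ n m + 1
    · by_cases h3 : ∃ k, k ≠ m ∧ k ≠ i ∧ (p : ℤ) ∣ n k + 1
      · obtain ⟨k, hkm, hki, hk⟩ := h3
        exact single_mem_of_three_dvd n hp hodd hmi hkm.symm hki.symm hm hi hk _
      · push Not at h3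
        exact single_mem_of_Npair_dvd n hsum hmi hi
          (fun k hkm hki => hcop _ (h3 k hkm hki)) (hy m i hmi)
    · exact single_mem_of_isCoprime n (hcop _ hm) _
  · push Not at hS
    rw [← Finset.univ_sum_single y]
    exact sum_mem fun m _ => single_mem_of_isCoprime n (hcop _ (hS m)) _

end HsubInt

theorem Hsub_eq_ker_Phibar_general {r : ℕ} (n : Fin r → ℤ) (hsum : ∑ i, n i = -2)
    (hodd : (Finset.univ.filter fun i => Odd (n i)).card ≤ 2) :
    Hsub n = (Phibar n).ker := by
  apply le_antisymm
  · refine (AddSubgroup.closure_le _).mpr ?_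
    rintro _ ⟨i, j, hij, rfl⟩
    rw [SetLike.mem_coe, AddMonoidHom.mem_ker, ← reduceMod_tauInt, Phibar_reduceMod_eq_zero_iff]
    exact fun a b hab => Npair_dvd_tauInt_sub n hij hab.ne
  · intro x hx
    obtain ⟨y, rfl⟩ := reduceMod_surjective n x
    rw [AddMonoidHom.mem_ker, Phibar_reduceMod_eq_zero_iff] at hx
    have hy : ∀ a b, a ≠ b → (Npair n a b : ℤ) ∣ y a - y b := fun a b hab =>
      hab.lt_or_gt.elim (hx a b) fun hba => by
        rw [Npair_comm, ← dvd_neg, neg_sub]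
        exact hx b a hba
    change y ∈ HsubInt n
    exact AddSubgroup.mem_of_forall_prime_mem_coprimeSaturation fun p hp =>
      HsubInt.mem_coprimeSaturation_of_Npair_dvd_sub n hsum hodd hp hy

/-- If `r ≥ 2`, no `n i` equals `-1`, `∑ n i = -2` and at most two indices `i` have `n i` odd,
then `H` is the kernel of `Φ̄`. -/
theorem Hsub_eq_ker_Phibar {r : ℕ} (hr : 2 ≤ r) (n : Fin r → ℤ)
    (hn : ∀ i, n i ≠ -1) (hsum : ∑ i, n i = -2)
    (hodd : (Finset.univ.filter fun i => Odd (n i)).card ≤ 2) :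
    Hsub n = (Phibar n).ker :=
  Hsub_eq_ker_Phibar_general n hsum hodd
end
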